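/- arXiv:1010.5951 — 2 statements merged into one kernel-verified Lean document; each statement's English description precedes it below -/
import Mathlib

section
/- Let (R, C, M_R, M_C) be a win-lose bimatrix game and let S_R ⊆ R, S_C ⊆ C be nonempty sets with no arcs entering S_R ∪ S_C from outside in the associated digraph, i.e., M_R(r,c) = 0 for every r ∈ R∖S_R and c ∈ S_C, and M_C(r,c) = 0 for every c ∈ C∖S_C and r ∈ S_R. If (x, y) is a Nash equilibrium of the restricted game with strategy sets S_R, S_C and payoff matrices the restrictions of M_R and M_C to S_R × S_C, then the pair of mixed strategies on R and C obtained from (x, y) by extending with probability 0 outside S_R and S_C is a Nash equilibrium of the full game. -/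
/-!
Against the zero-extended column strategy, a row outside `S_R` earns nothing (no arc enters
`S_C` from outside `S_R`), while a row inside `S_R` earns at most the equilibrium value `v` of
the subgame. Since payoffs are nonnegative, `v ≥ 0`, so no mixed strategy of the full game earns
more than `v`, which is what the zero-extended equilibrium earns. The column player's side is
the same argument for the transposed game.
-/

open Finset in
/-- `x` is a mixed strategy: a probability distribution on the finite strategy set `S`. -/
def IsMixed {S : Type*} [Fintype S] (x : S → ℝ) : Prop :=
  (∀ s, 0 ≤ x s) ∧ ∑ s, x s = 1

open Finset in
/-- `(x, y)` is a Nash equilibrium of the bimatrix game `(MR, MC)`. -/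
def IsNash {R C : Type*} [Fintype R] [Fintype C]
    (MR MC : R → C → ℝ) (x : R → ℝ) (y : C → ℝ) : Prop :=
  IsMixed x ∧ IsMixed y ∧
  (∀ x' : R → ℝ, IsMixed x' →
    ∑ r, ∑ c, x' r * MR r c * y c ≤ ∑ r, ∑ c, x r * MR r c * y c) ∧
  (∀ y' : C → ℝ, IsMixed y' →
    ∑ r, ∑ c, x r * MC r c * y' c ≤ ∑ r, ∑ c, x r * MC r c * y c)

open Finset Matrix

def Finset.extendByZero {α : Type*} [DecidableEq α] (S : Finset α) (x : S → ℝ) : α → ℝ :=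
  fun a => if h : a ∈ S then x ⟨a, h⟩ else 0

def IsBestResponse {R C : Type*} [Fintype R] [Fintype C] (M : Matrix R C ℝ) (x : R → ℝ)
    (y : C → ℝ) : Prop :=
  ∀ x', IsMixed x' → x' ⬝ᵥ M *ᵥ y ≤ x ⬝ᵥ M *ᵥ y

section extendByZero

variable {α : Type*} [DecidableEq α] {S : Finset α}

theorem Finset.extendByZero_nonneg {x : S → ℝ} (hx : ∀ s, 0 ≤ x s) (a : α) :
    0 ≤ S.extendByZero x a := by
  unfold extendByZero
  split_ifs
  exacts [hx _, le_rfl]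

variable [Fintype α]

theorem Finset.extendByZero_dotProduct (x : S → ℝ) (w : α → ℝ) :
    S.extendByZero x ⬝ᵥ w = x ⬝ᵥ fun s => w s := by
  simp only [dotProduct, extendByZero, dite_mul, zero_mul]
  rw [← sum_attach_eq_sum_dite S (fun s => x s * w s), univ_eq_attach]

theorem Finset.mulVec_extendByZero {R : Type*} (M : Matrix R α ℝ) (y : S → ℝ) :
    M *ᵥ S.extendByZero y = M.submatrix id (↑) *ᵥ y := by
  ext r
  simp only [mulVec, dotProduct_comm (M r), extendByZero_dotProduct]
  exact dotProduct_comm _ _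

theorem IsMixed.extendByZero {x : S → ℝ} (hx : IsMixed x) : IsMixed (S.extendByZero x) := by
  refine ⟨extendByZero_nonneg hx.1, ?_⟩
  simpa only [dotProduct, mul_one, hx.2] using S.extendByZero_dotProduct x fun _ => 1

end extendByZero

section mixed

variable {α : Type*} [Fintype α]

theorem isMixed_single [DecidableEq α] (a : α) : IsMixed (Pi.single a (1 : ℝ)) :=
  ⟨fun b => by by_cases h : b = a <;> simp [h], by simp⟩

theorem IsMixed.dotProduct_le {x : α → ℝ} (hx : IsMixed x) {u : α → ℝ} {v : ℝ}
    (hu : ∀ a, u a ≤ v) : x ⬝ᵥ u ≤ v :=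
  calc x ⬝ᵥ u ≤ ∑ a, x a * v := sum_le_sum fun a _ => mul_le_mul_of_nonneg_left (hu a) (hx.1 a)
    _ = v := by rw [← sum_mul, hx.2, one_mul]

end mixed

section game

variable {R C : Type*} [Fintype R] [Fintype C]

theorem sum_sum_mul_eq_dotProduct_mulVec (M : Matrix R C ℝ) (x : R → ℝ) (y : C → ℝ) :
    ∑ r, ∑ c, x r * M r c * y c = x ⬝ᵥ M *ᵥ y := by
  simp only [dotProduct, mulVec, mul_sum, mul_assoc]

theorem isNash_iff (MR MC : Matrix R C ℝ) (x : R → ℝ) (y : C → ℝ) :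
    IsNash MR MC x y ↔
      IsMixed x ∧ IsMixed y ∧ IsBestResponse MR x y ∧ IsBestResponse MCᵀ y x := by
  simp only [IsNash, IsBestResponse, sum_sum_mul_eq_dotProduct_mulVec, dotProduct_transpose_mulVec]

theorem IsBestResponse.extendByZero [DecidableEq R] [DecidableEq C] {M : Matrix R C ℝ}
    (hM : ∀ r c, 0 ≤ M r c) {SR : Finset R} {SC : Finset C}
    (hin : ∀ r ∉ SR, ∀ c ∈ SC, M r c = 0) {x : SR → ℝ} {y : SC → ℝ} (hx : IsMixed x)
    (hy : ∀ c, 0 ≤ y c) (hbest : IsBestResponse (M.submatrix (↑) (↑)) x y) :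
    IsBestResponse M (SR.extendByZero x) (SC.extendByZero y) := by
  intro x' hx'
  set v := x ⬝ᵥ M.submatrix (↑) (↑) *ᵥ y
  have hv : 0 ≤ v := dotProduct_nonneg_of_nonneg hx.1 fun r =>
    dotProduct_nonneg_of_nonneg (fun c => hM _ _) hy
  have hvalue : SR.extendByZero x ⬝ᵥ M *ᵥ SC.extendByZero y = v := by
    rw [Finset.extendByZero_dotProduct, Finset.mulVec_extendByZero]
    rfl
  rw [hvalue]
  refine hx'.dotProduct_le fun r => ?_
  rw [Finset.mulVec_extendByZero]
  by_cases hr : r ∈ SR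
  · have hpure := hbest _ (isMixed_single ⟨r, hr⟩)
    rwa [single_one_dotProduct] at hpure
  · calc (M.submatrix id (↑) *ᵥ y) r = 0 :=
          sum_eq_zero fun c _ => by simp [hin r hr c c.2]
      _ ≤ v := hv

end game

theorem nash_of_undominated_subgame_extends_general
    {R C : Type*} [Fintype R] [Fintype C] [DecidableEq R] [DecidableEq C]
    (MR MC : R → C → ℝ)
    (h01R : ∀ r c, MR r c = 0 ∨ MR r c = 1)
    (h01C : ∀ r c, MC r c = 0 ∨ MC r c = 1)
    (SR : Finset R) (SC : Finset C)
    (hinR : ∀ r ∉ SR, ∀ c ∈ SC, MR r c = 0)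
    (hinC : ∀ c ∉ SC, ∀ r ∈ SR, MC r c = 0)
    (x : {r // r ∈ SR} → ℝ) (y : {c // c ∈ SC} → ℝ)
    (hnash : IsNash (fun r c => MR r.1 c.1) (fun r c => MC r.1 c.1) x y) :
    IsNash MR MC (fun r => if h : r ∈ SR then x ⟨r, h⟩ else 0)
      (fun c => if h : c ∈ SC then y ⟨c, h⟩ else 0) := by
  have hnonneg : ∀ a : ℝ, a = 0 ∨ a = 1 → 0 ≤ a := by rintro a (rfl | rfl) <;> norm_num
  obtain ⟨hx, hy, hxbest, hybest⟩ := (isNash_iff _ _ x y).1 hnash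
  refine (isNash_iff MR MC _ _).2 ⟨hx.extendByZero, hy.extendByZero, ?_, ?_⟩
  · exact hxbest.extendByZero (fun r c => hnonneg _ (h01R r c)) hinR hx hy.1
  · exact hybest.extendByZero (M := MCᵀ) (fun c r => hnonneg _ (h01C r c)) hinC hy hx.1

/-- If no arcs of the digraph associated to a win-lose game enter `S_R ∪ S_C` from
outside, then any Nash equilibrium of the game restricted to `S_R × S_C`, extended
by zero outside `S_R` and `S_C`, is a Nash equilibrium of the full game. -/
theorem nash_of_undominated_subgame_extends
    {R C : Type*} [Fintype R] [Fintype C] [DecidableEq R] [DecidableEq C]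
    (MR MC : R → C → ℝ)
    (h01R : ∀ r c, MR r c = 0 ∨ MR r c = 1)
    (h01C : ∀ r c, MC r c = 0 ∨ MC r c = 1)
    (SR : Finset R) (SC : Finset C) (hSR : SR.Nonempty) (hSC : SC.Nonempty)
    (hinR : ∀ r ∉ SR, ∀ c ∈ SC, MR r c = 0)
    (hinC : ∀ c ∉ SC, ∀ r ∈ SR, MC r c = 0)
    (x : {r // r ∈ SR} → ℝ) (y : {c // c ∈ SC} → ℝ)
    (hnash : IsNash (fun r c => MR r.1 c.1) (fun r c => MC r.1 c.1) x y) :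
    IsNash MR MC (fun r => if h : r ∈ SR then x ⟨r, h⟩ else 0)
      (fun c => if h : c ∈ SC then y ⟨c, h⟩ else 0) :=
  nash_of_undominated_subgame_extends_general MR MC h01R h01C SR SC hinR hinC x y hnash
end

section
/- Every cycle of length 4 in the graph V8 has vertex set of the form {i, i+1, i+4, i+5} for some i ∈ ℤ/8ℤ; that is, if v0, v1, v2, v3 are distinct vertices of ℤ/8ℤ with v_t adjacent to v_{t+1 (mod 4)} in V8 for all t, then there exists i ∈ ℤ/8ℤ with {v0, v1, v2, v3} = {i, i+1, i+4, i+5}. -/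
/-- Adjacency in `V₈`, the four-rung Möbius ladder: `j` is adjacent to `j - 1`,
`j + 1` and `j + 4` (mod 8). -/
def V8Adj (i j : ZMod 8) : Prop := j = i + 1 ∨ i = j + 1 ∨ j = i + 4

instance : DecidableRel V8Adj := fun _ _ => inferInstanceAs (Decidable (_ ∨ _ ∨ _))

theorem ZMod.range_four {α : Type*} (f : ZMod 4 → α) :
    Set.range f = {f 0, f 1, f 2, f 3} := by
  ext x
  constructor
  · rintro ⟨t, rfl⟩
    obtain rfl | rfl | rfl | rfl : t = 0 ∨ t = 1 ∨ t = 2 ∨ t = 3 := by revert t; decide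
    all_goals simp
  · rintro (rfl | rfl | rfl | rfl) <;> exact ⟨_, rfl⟩

theorem v8_four_cycle_support_finset (a b c d : ZMod 8)
    (hab : a ≠ b) (hac : a ≠ c) (had : a ≠ d) (hbc : b ≠ c) (hbd : b ≠ d) (hcd : c ≠ d)
    (eab : V8Adj a b) (ebc : V8Adj b c) (ecd : V8Adj c d) (eda : V8Adj d a) :
    ∃ i : ZMod 8, ({a, b, c, d} : Finset (ZMod 8)) = {i, i + 1, i + 4, i + 5} := by
  revert a b c d
  decide

/-- Every cycle of length 4 in the graph `V₈` has vertex set of the form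
`{i, i+1, i+4, i+5}` for some `i`. -/
theorem v8_four_cycle_support
    (f : ZMod 4 → ZMod 8) (hinj : Function.Injective f)
    (hadj : ∀ t : ZMod 4, V8Adj (f t) (f (t + 1))) :
    ∃ i : ZMod 8, Set.range f = ({i, i + 1, i + 4, i + 5} : Set (ZMod 8)) := by
  obtain ⟨i, hi⟩ := v8_four_cycle_support_finset (f 0) (f 1) (f 2) (f 3)
    (hinj.ne (by decide)) (hinj.ne (by decide)) (hinj.ne (by decide))
    (hinj.ne (by decide)) (hinj.ne (by decide)) (hinj.ne (by decide))
    (hadj 0) (hadj 1) (hadj 2) (hadj 3)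
  refine ⟨i, ?_⟩
  rw [ZMod.range_four]
  simpa using congrArg ((↑) : Finset (ZMod 8) → Set (ZMod 8)) hi
end
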